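/- Assume condition (*). For every v ∈ V \ {0}, the limits lim_{i→∞}(f_{i+1}(v) − f_i(v)) and lim_{i→∞} i^{-1} f_i(v) both exist, they are equal, and their common value d(v) belongs to S(V). -/

import Mathlib

open Filter Topology NormedSpace
open scoped LinearAlgebra.Projectivization

set_option linter.unusedSectionVars false

noncomputable section

namespace CSW

variable {E : Type*} [NormedAddCommGroup E] [InnerProductSpace ℂ E] [FiniteDimensional ℂ E]
variable {V : Type*} [NormedAddCommGroup V] [InnerProductSpace ℂ V] [FiniteDimensional ℂ V]

/-- The exponential `e^T` of a bounded operator, as a unit (invertible element) of the algebra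
of continuous linear endomorphisms. -/
def expUnit (T : E →L[ℂ] E) : (E →L[ℂ] E)ˣ where
  val := exp T
  inv := exp (-T)
  val_inv := by
    letI : NormedAlgebra ℚ (E →L[ℂ] E) := .restrictScalars ℚ ℂ (E →L[ℂ] E)
    rw [← exp_add_of_commute (Commute.refl T).neg_right, add_neg_cancel, exp_zero]
  inv_val := by
    letI : NormedAlgebra ℚ (E →L[ℂ] E) := .restrictScalars ℚ ℂ (E →L[ℂ] E)
    rw [← exp_add_of_commute (Commute.refl T).neg_left, neg_add_cancel, exp_zero]

/-- `Bseq A i` is `B_i = A_i A_{i-1}⁻¹` (with the junk value `B_0 = 1`). -/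
def Bseq (A : ℕ → (E →L[ℂ] E)ˣ) (i : ℕ) : (E →L[ℂ] E)ˣ := A i * (A (i - 1))⁻¹

/-- Condition (*): for any subsequence, after passing to a further subsequence, `B_{α+1}` and
`B_{α+2}` both converge (in operator norm) to `g e^Λ g⁻¹` for some unitary `g`. -/
def CondStar (A : ℕ → (E →L[ℂ] E)ˣ) (Λ : E →L[ℂ] E) : Prop :=
  ∀ φ : ℕ → ℕ, StrictMono φ → ∃ ψ : ℕ → ℕ, StrictMono ψ ∧ ∃ g : (E →L[ℂ] E)ˣ,
    (g : E →L[ℂ] E) ∈ unitary (E →L[ℂ] E) ∧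
    Tendsto (fun j => (Bseq A (φ (ψ j) + 1) : E →L[ℂ] E)) atTop
      (𝓝 ((g * expUnit Λ * g⁻¹ : (E →L[ℂ] E)ˣ) : E →L[ℂ] E)) ∧
    Tendsto (fun j => (Bseq A (φ (ψ j) + 2) : E →L[ℂ] E)) atTop
      (𝓝 ((g * expUnit Λ * g⁻¹ : (E →L[ℂ] E)ˣ) : E →L[ℂ] E))

/-- Condition (*)' for a given gauge sequence `g`: `g 0 = 1`, each `g i` is unitary,
`B_i g_i e^{-Λ} g_i⁻¹ → Id` and `g_{i-1}⁻¹ g_i → Id`. -/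
def CondStar' (A : ℕ → (E →L[ℂ] E)ˣ) (Λ : E →L[ℂ] E) (g : ℕ → (E →L[ℂ] E)ˣ) : Prop :=
  g 0 = 1 ∧ (∀ i, (g i : E →L[ℂ] E) ∈ unitary (E →L[ℂ] E)) ∧
  Tendsto (fun i => ((Bseq A i * g i * expUnit (-Λ) * (g i)⁻¹ : (E →L[ℂ] E)ˣ) : E →L[ℂ] E))
    atTop (𝓝 1) ∧
  Tendsto (fun i => (((g (i - 1))⁻¹ * g i : (E →L[ℂ] E)ˣ) : E →L[ℂ] E)) atTop (𝓝 1)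

/-- Membership in `G_Λ = {g ∈ G : g Λ g⁻¹ = Λ}`. -/
def InGΛ (Λ : E →L[ℂ] E) (h : (E →L[ℂ] E)ˣ) : Prop :=
  (h : E →L[ℂ] E) * Λ = Λ * (h : E →L[ℂ] E)

/-- Membership in `K_Λ = {g ∈ K : g Λ g⁻¹ = Λ}`. -/
def InKΛ (Λ : E →L[ℂ] E) (h : (E →L[ℂ] E)ˣ) : Prop :=
  (h : E →L[ℂ] E) ∈ unitary (E →L[ℂ] E) ∧ InGΛ Λ h

/-- A (continuous, finite-dimensional) complex representation `ρ` of `G = GL(E)` on a Hermitian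
vector space `V`, mapping unitary elements to unitary elements, together with a self-adjoint
operator `Λ_V` on `V` compatible with `Λ` via `ρ(e^{tΛ}) = e^{tΛ_V}`. -/
structure Rep (Λ : E →L[ℂ] E) (V : Type*) [NormedAddCommGroup V] [InnerProductSpace ℂ V]
    [FiniteDimensional ℂ V] where
  ρ : (E →L[ℂ] E)ˣ →* (V →L[ℂ] V)ˣ
  continuous_ρ : Continuous fun u : (E →L[ℂ] E)ˣ => ((ρ u : (V →L[ℂ] V)ˣ) : V →L[ℂ] V)
  unitary_ρ : ∀ u : (E →L[ℂ] E)ˣ, (u : E →L[ℂ] E) ∈ unitary (E →L[ℂ] E) →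
    ((ρ u : (V →L[ℂ] V)ˣ) : V →L[ℂ] V) ∈ unitary (V →L[ℂ] V)
  ΛV : V →L[ℂ] V
  selfAdjoint_ΛV : IsSelfAdjoint ΛV
  exp_eq : ∀ t : ℝ, ((ρ (expUnit ((t : ℂ) • Λ)) : (V →L[ℂ] V)ˣ) : V →L[ℂ] V)
      = exp ((t : ℂ) • ΛV)

variable {Λ : E →L[ℂ] E}

theorem unit_apply_ne_zero (u : (V →L[ℂ] V)ˣ) {v : V} (hv : v ≠ 0) :
    (u : V →L[ℂ] V) v ≠ 0 := by
  intro h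
  apply hv
  have h2 : (((u⁻¹ : (V →L[ℂ] V)ˣ) : V →L[ℂ] V) * (u : V →L[ℂ] V)) v = 0 := by
    rw [ContinuousLinearMap.mul_apply, h, map_zero]
  rwa [Units.inv_mul, ContinuousLinearMap.one_apply] at h2

theorem unit_apply_injective (u : (V →L[ℂ] V)ˣ) :
    Function.Injective ((u : V →L[ℂ] V) : V → V) := by
  intro a b hab
  have h2 := congrArg (fun x => ((u⁻¹ : (V →L[ℂ] V)ˣ) : V →L[ℂ] V) x) hab
  simpa [← ContinuousLinearMap.mul_apply, Units.inv_mul] using h2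

/-- `f_i(v) = log ‖ρ(A_i) v‖`. -/
def fseq (R : Rep Λ V) (A : ℕ → (E →L[ℂ] E)ˣ) (v : V) (i : ℕ) : ℝ :=
  Real.log ‖(R.ρ (A i) : V →L[ℂ] V) v‖

/-- The quotient topology on the projectivization of a topological vector space. -/
instance : TopologicalSpace (ℙ ℂ V) := instTopologicalSpaceQuotient

/-- The natural action of `GL(E)` on `ℙ(V)` through the representation `R`. -/
def pact (R : Rep Λ V) (u : (E →L[ℂ] E)ˣ) : ℙ ℂ V → ℙ ℂ V :=
  Projectivization.map (((R.ρ u : (V →L[ℂ] V)ˣ) : V →L[ℂ] V) : V →ₗ[ℂ] V)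
    (unit_apply_injective _)

/-- The limit set `Lim(v) ⊆ ℙ(V)`: the union of the `ρ(K_Λ)`-orbits of all subsequential limits
of `[ρ(g_i⁻¹ A_i) v]`. -/
def LimSet (R : Rep Λ V) (A g : ℕ → (E →L[ℂ] E)ˣ) {v : V} (hv : v ≠ 0) :
    Set (ℙ ℂ V) :=
  {y | ∃ (w : V) (hw : w ≠ 0) (k : (E →L[ℂ] E)ˣ), InKΛ Λ k ∧
    y = Projectivization.mk ℂ ((R.ρ k : V →L[ℂ] V) w) (unit_apply_ne_zero _ hw) ∧
    ∃ φ : ℕ → ℕ, StrictMono φ ∧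
      Tendsto (fun j => Projectivization.mk ℂ
          ((R.ρ ((g (φ j))⁻¹ * A (φ j)) : V →L[ℂ] V) v) (unit_apply_ne_zero _ hv))
        atTop (𝓝 (Projectivization.mk ℂ w hw))}

/-- The eigenspace `U` of `Λ` with (real) eigenvalue `c`. -/
def eigU (Λ : E →L[ℂ] E) (c : ℝ) : Submodule ℂ E :=
  Module.End.eigenspace (Λ : E →ₗ[ℂ] E) (c : ℂ)

/-- The weight `d(v) = lim_i i⁻¹ log ‖A_i v‖` for the standard representation of `GL(E)` on `E`
(a junk value if the limit does not exist). -/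
def dstd (A : ℕ → (E →L[ℂ] E)ˣ) (v : E) : ℝ :=
  limUnder atTop fun i : ℕ => Real.log ‖(A i : E →L[ℂ] E) v‖ / i

/-- `p_s = Σ_{k ≤ s} n_k` where `n_k = dim U_k`. -/
def psum (Λ : E →L[ℂ] E) {r : ℕ} (lam : Fin r → ℝ) (s : Fin r) : ℕ :=
  ∑ k ∈ Finset.univ.filter (fun k => k ≤ s), Module.finrank ℂ (eigU Λ (lam k))

/-- `q_s = Σ_{k ≥ s} n_k` where `n_k = dim U_k`. -/
def qsum (Λ : E →L[ℂ] E) {r : ℕ} (lam : Fin r → ℝ) (s : Fin r) : ℕ :=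
  ∑ k ∈ Finset.univ.filter (fun k => s ≤ k), Module.finrank ℂ (eigU Λ (lam k))

/-- A model for the `p`-th exterior power of `E`, with its induced Hermitian metric
(determined by `⟨x₁∧⋯∧x_p, y₁∧⋯∧y_p⟩ = det(⟨x_i, y_j⟩)`), the induced representation of `GL(E)`,
and the induced self-adjoint operator (the derivation extension of `Λ`, pinned down by
`Rep.exp_eq` and equivariance of `wedge`). -/
structure ExtPower (Λ : E →L[ℂ] E) (p : ℕ) where
  P : Type
  [normed : NormedAddCommGroup P]
  [ips : InnerProductSpace ℂ P]
  [fd : FiniteDimensional ℂ P]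
  R : Rep Λ P
  wedge : E [⋀^Fin p]→ₗ[ℂ] P
  wedge_map : ∀ (u : (E →L[ℂ] E)ˣ) (x : Fin p → E),
    ((R.ρ u : (P →L[ℂ] P)ˣ) : P →L[ℂ] P) (wedge x) = wedge fun j => (u : E →L[ℂ] E) (x j)
  wedge_inner : ∀ x y : Fin p → E,
    (inner ℂ (wedge x) (wedge y) : ℂ) = (Matrix.of fun i j : Fin p => (inner ℂ (x i) (y j) : ℂ)).det
  wedge_span : Submodule.span ℂ (Set.range wedge) = ⊤

attribute [instance] ExtPower.normed ExtPower.ips ExtPower.fd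

/-- A bundle of the choices made in Section 2 of the paper: a gauge sequence `g` as in (*)',
the filtration `V_s` (with `V_{r+1} = 0`), complements `W_s` with `V_s = W_s ⊕ V_{s+1}` and
`Lim(W_s) = {[⋀^{n_s} U_s]}`, and identifications `C_i → Id` carrying `g_i⁻¹ A_i · W_s`
onto `U_s`. -/
structure Choices (A : ℕ → (E →L[ℂ] E)ˣ) (Λ : E →L[ℂ] E) (r : ℕ) (lam : Fin r → ℝ)
    (EP : ∀ p : ℕ, ExtPower Λ p) where
  g : ℕ → (E →L[ℂ] E)ˣ
  hg : CondStar' A Λ g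
  Vsub : Fin (r + 1) → Submodule ℂ E
  hVsub : ∀ s : Fin r, (Vsub s.castSucc : Set E) = {v : E | v = 0 ∨ dstd A v ≤ lam s}
  hVlast : Vsub (Fin.last r) = ⊥
  W : Fin r → Submodule ℂ E
  hW_sup : ∀ s : Fin r, W s ⊔ Vsub s.succ = Vsub s.castSucc
  hW_inf : ∀ s : Fin r, W s ⊓ Vsub s.succ = ⊥
  hW_lim : ∀ s : Fin r, ∀ b : Fin (Module.finrank ℂ (eigU Λ (lam s))) → E,
    LinearIndependent ℂ b → Submodule.span ℂ (Set.range b) = W s →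
    ∀ c : Fin (Module.finrank ℂ (eigU Λ (lam s))) → E,
    LinearIndependent ℂ c → Submodule.span ℂ (Set.range c) = eigU Λ (lam s) →
    ∃ (hb : (EP (Module.finrank ℂ (eigU Λ (lam s)))).wedge b ≠ 0)
      (hc : (EP (Module.finrank ℂ (eigU Λ (lam s)))).wedge c ≠ 0),
      LimSet (EP (Module.finrank ℂ (eigU Λ (lam s)))).R A g hb
        = {Projectivization.mk ℂ ((EP (Module.finrank ℂ (eigU Λ (lam s)))).wedge c) hc}
  C : ℕ → (E →L[ℂ] E)ˣ
  hC_lim : Tendsto (fun i => (C i : E →L[ℂ] E)) atTop (𝓝 1)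
  hC_map : ∀ (s : Fin r) (i : ℕ),
    Submodule.map ((((C i * (g i)⁻¹ * A i : (E →L[ℂ] E)ˣ) : E →L[ℂ] E) : E →ₗ[ℂ] E)) (W s)
      = eigU Λ (lam s)

/-- A model for the symmetric algebra `Sym(E*) = ⊕_k Sym^k(E*)` on the dual of `E`:
each graded piece is a Hermitian space carrying a compatible representation of `GL(E)`
(induced by the dual of the standard representation), `gen` identifies the degree-one piece
with `E*` equivariantly, and the product is bilinear, equivariant, has no zero divisors, and
together with the generators spans each graded piece. -/
structure SymModel (Λ : E →L[ℂ] E) where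
  P : ℕ → Type
  [normed : ∀ k, NormedAddCommGroup (P k)]
  [ips : ∀ k, InnerProductSpace ℂ (P k)]
  [fd : ∀ k, FiniteDimensional ℂ (P k)]
  R : ∀ k, Rep Λ (P k)
  mul : ∀ {k l : ℕ}, P k →ₗ[ℂ] P l →ₗ[ℂ] P (k + l)
  mul_equivariant : ∀ {k l : ℕ} (u : (E →L[ℂ] E)ˣ) (x : P k) (y : P l),
    (((R (k + l)).ρ u : (P (k + l) →L[ℂ] P (k + l))ˣ) : P (k + l) →L[ℂ] P (k + l)) (mul x y)
      = mul ((((R k).ρ u : (P k →L[ℂ] P k)ˣ) : P k →L[ℂ] P k) x)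
            ((((R l).ρ u : (P l →L[ℂ] P l)ˣ) : P l →L[ℂ] P l) y)
  mul_ne_zero : ∀ {k l : ℕ} {x : P k} {y : P l}, x ≠ 0 → y ≠ 0 → mul x y ≠ 0
  gen : (E →L[ℂ] ℂ) ≃ₗ[ℂ] P 1
  gen_equivariant : ∀ (u : (E →L[ℂ] E)ˣ) (l : E →L[ℂ] ℂ),
    (((R 1).ρ u : (P 1 →L[ℂ] P 1)ˣ) : P 1 →L[ℂ] P 1) (gen l)
      = gen (l.comp (((u⁻¹ : (E →L[ℂ] E)ˣ) : E →L[ℂ] E)))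
  span_gen_mul : ∀ k : ℕ, Submodule.span ℂ
      {z : P (k + 1) | ∃ (x : P k) (l : E →L[ℂ] ℂ), z = mul x (gen l)} = ⊤

attribute [instance] SymModel.normed SymModel.ips SymModel.fd

/-!
With `h_i = f_{i+1}(v) - f_i(v)`: along a subsequence on which `B_{α+1}, B_{α+2} → g e^Λ g⁻¹`
and the directions of `ρ(A_α) v` converge, the pair `(h_α, h_{α+1})` tends to
`(log ‖P w‖, log ‖P² w‖ - log ‖P w‖)` for `P = e^{Λ_V}` and a unit vector `w`. As `P` is
self-adjoint, `‖P w‖² = ⟨w, P² w⟩ ≤ ‖P² w‖`, with equality only if `w` is an eigenvector of `P²`,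
which puts `log ‖P w‖` in `S(V)`. So `h` crosses each level outside the finite set `S(V)`
downwards only finitely often, which forces `liminf h = limsup h`; the limit lies in `S(V)` by the
equality case, and `f_i(v) / i` has the same limit by Cesàro.
-/

/-- The consecutive pairs `(h i, h (i + 1))` are relatively compact, and each of their cluster
points `(a, b)` satisfies `a ≤ b`, with equality only if `a ∈ S`. -/
def StepClusterCondition (S : Set ℝ) (h : ℕ → ℝ) : Prop :=
  ∀ φ : ℕ → ℕ, StrictMono φ → ∃ ψ : ℕ → ℕ, StrictMono ψ ∧ ∃ a b : ℝ, a ≤ b ∧ (b ≤ a → a ∈ S) ∧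
    Tendsto (fun j => h (φ (ψ j))) atTop (𝓝 a) ∧ Tendsto (fun j => h (φ (ψ j) + 1)) atTop (𝓝 b)

theorem eventually_of_frequently_of_eventually_imp_succ {P : ℕ → Prop}
    (hstep : ∀ᶠ i in atTop, P i → P (i + 1)) (hfreq : ∃ᶠ i in atTop, P i) :
    ∀ᶠ i in atTop, P i := by
  obtain ⟨N, hN⟩ := eventually_atTop.1 hstep
  obtain ⟨i₀, hi₀N, hi₀⟩ := frequently_atTop.1 hfreq N
  refine eventually_atTop.2 ⟨i₀, fun i hi => ?_⟩
  induction i, hi using Nat.le_induction with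
  | base => exact hi₀
  | succ i hi ih => exact hN i (hi₀N.trans hi) ih

namespace StepClusterCondition

variable {S : Set ℝ} {h : ℕ → ℝ}

theorem isBoundedUnder_abs (H : StepClusterCondition S h) :
    IsBoundedUnder (· ≤ ·) atTop fun i => |h i| := by
  by_contra hunbdd
  simp only [IsBoundedUnder, IsBounded, eventually_map, not_exists, not_eventually,
    not_le] at hunbdd
  obtain ⟨φ, hφ, hlarge⟩ := extraction_forall_of_frequently fun n : ℕ => hunbdd n
  obtain ⟨ψ, hψ, a, -, -, -, ha, -⟩ := H φ hφ
  refine not_tendsto_atTop_of_tendsto_nhds ha.abs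
    (tendsto_atTop_mono (fun j => ?_) tendsto_natCast_atTop_atTop)
  exact (Nat.cast_le.2 (hψ.id_le j)).trans (hlarge (ψ j)).le

theorem eventually_lt_succ_of_lt (H : StepClusterCondition S h) {t : ℝ} (ht : t ∉ S) :
    ∀ᶠ i in atTop, t < h i → t < h (i + 1) := by
  by_contra hcross
  simp only [not_eventually, Classical.not_imp, not_lt] at hcross
  obtain ⟨φ, hφ, hφcross⟩ := extraction_of_frequently_atTop hcross
  obtain ⟨ψ, hψ, a, b, hab, hdiag, ha, hb⟩ := H φ hφ
  have hta : t ≤ a := ge_of_tendsto ha (.of_forall fun j => (hφcross (ψ j)).1.le)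
  have hbt : b ≤ t := le_of_tendsto hb (.of_forall fun j => (hφcross (ψ j)).2)
  have hat : a = t := le_antisymm (hab.trans hbt) hta
  exact ht (hat ▸ hdiag (hbt.trans hta))

theorem exists_tendsto (H : StepClusterCondition S h) (hS : S.Finite) :
    ∃ L ∈ S, Tendsto h atTop (𝓝 L) := by
  obtain ⟨hbdd, hbdd'⟩ := isBoundedUnder_le_abs.1 H.isBoundedUnder_abs
  have hlim : liminf h atTop = limsup h atTop := by
    refine (liminf_le_limsup hbdd hbdd').antisymm (le_of_not_gt fun hlt => ?_)
    obtain ⟨t, ⟨hlt, htL⟩, htS⟩ := ((Set.Ioo_infinite hlt).sdiff hS).nonempty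
    have hev : ∀ᶠ i in atTop, t < h i := eventually_of_frequently_of_eventually_imp_succ
      (H.eventually_lt_succ_of_lt htS) (frequently_lt_of_lt_limsup hbdd'.isCoboundedUnder_le htL)
    exact hlt.not_ge (le_liminf_of_le hbdd.isCoboundedUnder_ge (hev.mono fun i hi => hi.le))
  have htend := tendsto_of_liminf_eq_limsup hlim rfl hbdd hbdd'
  refine ⟨_, ?_, htend⟩
  obtain ⟨ψ, hψ, a, b, -, hdiag, ha, hb⟩ := H id strictMono_id
  have hLa := tendsto_nhds_unique ha (htend.comp hψ.tendsto_atTop)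
  have hLb := tendsto_nhds_unique hb
    ((htend.comp (tendsto_add_atTop_nat 1)).comp hψ.tendsto_atTop)
  exact hLa ▸ hdiag (hLb.trans hLa.symm).le

end StepClusterCondition

theorem tendsto_div_of_tendsto_sub {f : ℕ → ℝ} {d : ℝ}
    (h : Tendsto (fun i => f (i + 1) - f i) atTop (𝓝 d)) :
    Tendsto (fun i : ℕ => f i / i) atTop (𝓝 d) := by
  have hsum := h.cesaro.add (tendsto_const_div_atTop_nhds_zero_nat (f 0))
  rw [add_zero] at hsum
  refine hsum.congr fun n => ?_
  rw [Finset.sum_range_sub f n]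
  ring

theorem _root_.Filter.Tendsto.clm_apply {𝕜 F G ι : Type*} [NontriviallyNormedField 𝕜]
    [NormedAddCommGroup F] [NormedSpace 𝕜 F] [NormedAddCommGroup G] [NormedSpace 𝕜 G]
    {l : Filter ι} {T : ι → F →L[𝕜] G} {S : F →L[𝕜] G} {x : ι → F} {y : F}
    (hT : Tendsto T l (𝓝 S)) (hx : Tendsto x l (𝓝 y)) :
    Tendsto (fun i => T i (x i)) l (𝓝 (S y)) :=
  (isBoundedBilinearMap_apply.continuous.tendsto (S, y)).comp (hT.prodMk_nhds hx)

theorem mem_spectrum_of_apply_eq_smul {T : V →L[ℂ] V} {μ : ℂ} {x : V} (hx : x ≠ 0)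
    (h : T x = μ • x) : μ ∈ spectrum ℂ T :=
  ContinuousLinearMap.spectrum_eq (f := T) ▸
    (Module.End.hasEigenvalue_of_hasEigenvector
      ⟨Module.End.mem_eigenspace_iff.2 h, hx⟩).mem_spectrum

theorem finite_real_spectrum (T : V →L[ℂ] V) : (spectrum ℝ T).Finite := by
  rw [← spectrum.preimage_algebraMap ℂ, ContinuousLinearMap.spectrum_eq (f := T)]
  exact (Module.End.finite_spectrum _).preimage Complex.ofReal_injective.injOn

theorem norm_exp_apply_pos (T : V →L[ℂ] V) {w : V} (hw : w ≠ 0) : 0 < ‖exp T w‖ :=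
  norm_pos_iff.2 (unit_apply_ne_zero (expUnit T) hw)

section SelfAdjoint

variable {P T : V →L[ℂ] V}

theorem _root_.IsSelfAdjoint.inner_apply_apply (hP : IsSelfAdjoint P) (w : V) :
    inner ℂ w (P (P w)) = ((‖P w‖ ^ 2 : ℝ) : ℂ) := by
  rw [Complex.ofReal_pow]
  exact (hP.isSymmetric w (P w)).symm.trans (inner_self_eq_norm_sq_to_K (P w))

theorem _root_.IsSelfAdjoint.norm_apply_sq_le (hP : IsSelfAdjoint P) (w : V) :
    ‖P w‖ ^ 2 ≤ ‖w‖ * ‖P (P w)‖ := by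
  calc ‖P w‖ ^ 2 = ‖inner ℂ w (P (P w))‖ := by
        rw [hP.inner_apply_apply, Complex.norm_real, Real.norm_of_nonneg (by positivity)]
    _ ≤ ‖w‖ * ‖P (P w)‖ := norm_inner_le_norm _ _

theorem _root_.IsSelfAdjoint.apply_apply_eq_of_norm_le (hP : IsSelfAdjoint P) {w : V}
    (hw : ‖w‖ = 1) (h : ‖P (P w)‖ ≤ ‖P w‖ ^ 2) : P (P w) = ((‖P w‖ ^ 2 : ℝ) : ℂ) • w := by
  set s := ‖P w‖ ^ 2
  have hre : RCLike.re (inner ℂ (P (P w)) ((s : ℂ) • w)) = s * s := by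
    rw [inner_smul_right, ← inner_conj_symm (P (P w)) w, hP.inner_apply_apply,
      Complex.conj_ofReal, ← Complex.ofReal_mul]
    rfl
  have hsq : ‖P (P w) - (s : ℂ) • w‖ ^ 2 = ‖P (P w)‖ ^ 2 - s ^ 2 := by
    rw [norm_sub_sq (𝕜 := ℂ), hre, norm_smul, hw, Complex.norm_real,
      Real.norm_of_nonneg (by positivity)]
    ring
  have hle : ‖P (P w)‖ ^ 2 ≤ s ^ 2 := pow_le_pow_left₀ (norm_nonneg _) h 2
  rw [← sub_eq_zero, ← norm_eq_zero]
  nlinarith [norm_nonneg (P (P w) - (s : ℂ) • w)]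

theorem _root_.IsSelfAdjoint.two_mul_log_norm_exp_le (hT : IsSelfAdjoint T) {w : V}
    (hw : ‖w‖ = 1) : 2 * Real.log ‖exp T w‖ ≤ Real.log ‖exp T (exp T w)‖ := by
  have hpos := norm_exp_apply_pos T (norm_ne_zero_iff.1 (hw ▸ one_ne_zero))
  calc 2 * Real.log ‖exp T w‖ = Real.log (‖exp T w‖ ^ 2) := by simp [Real.log_pow]
    _ ≤ Real.log ‖exp T (exp T w)‖ := Real.log_le_log (by positivity)
        (by simpa [hw] using hT.exp.norm_apply_sq_le w)

theorem _root_.IsSelfAdjoint.log_norm_exp_mem_spectrum (hT : IsSelfAdjoint T) {w : V}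
    (hw : ‖w‖ = 1) (h : Real.log ‖exp T (exp T w)‖ ≤ 2 * Real.log ‖exp T w‖) :
    Real.log ‖exp T w‖ ∈ spectrum ℝ T := by
  have hw0 : w ≠ 0 := norm_ne_zero_iff.1 (hw ▸ one_ne_zero)
  have hpos := norm_exp_apply_pos T hw0
  have hpos₂ := norm_exp_apply_pos T (norm_pos_iff.1 hpos)
  have hle : ‖exp T (exp T w)‖ ≤ ‖exp T w‖ ^ 2 := by
    rwa [← Real.log_le_log_iff hpos₂ (by positivity), Real.log_pow, Nat.cast_two]
  have heig : ‖exp T w‖ ^ 2 ∈ spectrum ℝ (exp T * exp T) :=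
    spectrum.of_algebraMap_mem ℂ
      (mem_spectrum_of_apply_eq_smul hw0 (hT.exp.apply_apply_eq_of_norm_le hw hle))
  have hspec :
      spectrum ℝ (exp T * exp T) = (fun x => Real.exp x * Real.exp x) '' spectrum ℝ T := by
    rw [← CFC.real_exp_eq_normedSpace_exp hT, ← cfc_mul Real.exp Real.exp T,
      cfc_map_spectrum (fun x => Real.exp x * Real.exp x) T hT (by fun_prop)]
  rw [hspec] at heig
  obtain ⟨μ, hμ, hμw⟩ := heig
  have hnorm : ‖exp T w‖ = Real.exp μ :=
    (pow_left_inj₀ hpos.le (Real.exp_pos μ).le two_ne_zero).1 (by rw [← hμw, sq])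
  rwa [hnorm, Real.log_exp]

end SelfAdjoint

section Unitary

variable {U : (V →L[ℂ] V)ˣ}

theorem norm_inv_apply_of_mem_unitary (hU : (U : V →L[ℂ] V) ∈ unitary (V →L[ℂ] V)) (x : V) :
    ‖(↑U⁻¹ : V →L[ℂ] V) x‖ = ‖x‖ := by
  calc ‖(↑U⁻¹ : V →L[ℂ] V) x‖ = ‖(U : V →L[ℂ] V) ((↑U⁻¹ : V →L[ℂ] V) x)‖ :=
        (ContinuousLinearMap.norm_map_of_mem_unitary hU _).symm
    _ = ‖x‖ := by rw [← mul_apply_eq_comp, Units.mul_inv, one_apply_eq_self]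

theorem norm_conj_apply_of_mem_unitary (hU : (U : V →L[ℂ] V) ∈ unitary (V →L[ℂ] V))
    (P : V →L[ℂ] V) (x : V) :
    ‖((U : V →L[ℂ] V) * P * ↑U⁻¹) x‖ = ‖P ((↑U⁻¹ : V →L[ℂ] V) x)‖ :=
  ContinuousLinearMap.norm_map_of_mem_unitary hU _

end Unitary

namespace Rep

theorem ρ_expUnit (R : Rep Λ V) : (R.ρ (expUnit Λ) : V →L[ℂ] V) = exp R.ΛV := by
  simpa using R.exp_eq 1

theorem tendsto_ρ (R : Rep Λ V) {ι : Type*} {l : Filter ι} {B : ι → (E →L[ℂ] E)ˣ}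
    {M : (E →L[ℂ] E)ˣ} (h : Tendsto (fun j => (B j : E →L[ℂ] E)) l (𝓝 ↑M)) :
    Tendsto (fun j => (R.ρ (B j) : V →L[ℂ] V)) l (𝓝 ↑(R.ρ M)) :=
  (R.continuous_ρ.tendsto M).comp (Units.isOpenEmbedding_val.isInducing.tendsto_nhds_iff.2 h)

end Rep

section Growth

variable {v : V}

theorem fseq_sub_fseq (R : Rep Λ V) (A : ℕ → (E →L[ℂ] E)ˣ) (hv : v ≠ 0) (m n : ℕ) :
    fseq R A v m - fseq R A v n = Real.log ‖(R.ρ (A m * (A n)⁻¹) : V →L[ℂ] V)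
      ((‖(R.ρ (A n) : V →L[ℂ] V) v‖⁻¹ : ℂ) • (R.ρ (A n) : V →L[ℂ] V) v)‖ := by
  have hρ : (R.ρ (A m * (A n)⁻¹) : V →L[ℂ] V) ((R.ρ (A n) : V →L[ℂ] V) v)
      = (R.ρ (A m) : V →L[ℂ] V) v := by
    rw [← mul_apply_eq_comp, ← Units.val_mul, ← map_mul, inv_mul_cancel_right]
  rw [map_smul, hρ, norm_smul, norm_inv, Complex.norm_real, norm_norm,
    Real.log_mul (inv_ne_zero (norm_ne_zero_iff.2 (unit_apply_ne_zero _ hv)))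
      (norm_ne_zero_iff.2 (unit_apply_ne_zero _ hv)), Real.log_inv, fseq, fseq]
  ring

theorem fseq_succ_sub_fseq (R : Rep Λ V) (A : ℕ → (E →L[ℂ] E)ˣ) (hv : v ≠ 0) (n : ℕ) :
    fseq R A v (n + 1) - fseq R A v n = Real.log ‖(R.ρ (Bseq A (n + 1)) : V →L[ℂ] V)
      ((‖(R.ρ (A n) : V →L[ℂ] V) v‖⁻¹ : ℂ) • (R.ρ (A n) : V →L[ℂ] V) v)‖ :=
  fseq_sub_fseq R A hv (n + 1) n

theorem fseq_add_two_sub_fseq (R : Rep Λ V) (A : ℕ → (E →L[ℂ] E)ˣ) (hv : v ≠ 0) (n : ℕ) :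
    fseq R A v (n + 2) - fseq R A v n = Real.log ‖(R.ρ (Bseq A (n + 2)) : V →L[ℂ] V)
      ((R.ρ (Bseq A (n + 1)) : V →L[ℂ] V)
        ((‖(R.ρ (A n) : V →L[ℂ] V) v‖⁻¹ : ℂ) • (R.ρ (A n) : V →L[ℂ] V) v))‖ := by
  have hB : Bseq A (n + 2) * Bseq A (n + 1) = A (n + 2) * (A n)⁻¹ := by
    simp [Bseq, mul_assoc]
  rw [fseq_sub_fseq R A hv, ← hB, map_mul, Units.val_mul, mul_apply_eq_comp]

end Growth

section Extraction

variable {A : ℕ → (E →L[ℂ] E)ˣ} {v : V}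

/-- The witness is `w = ρ(g)⁻¹ y`, where `B_{α+1}, B_{α+2} → g e^Λ g⁻¹` and `y` is the limit of
the directions of `ρ(A_α) v` along the subsequence. -/
theorem CondStar.exists_subseq_tendsto (hstar : CondStar A Λ) (R : Rep Λ V) (hv : v ≠ 0)
    {φ : ℕ → ℕ} (hφ : StrictMono φ) :
    ∃ ψ : ℕ → ℕ, StrictMono ψ ∧ ∃ w : V, ‖w‖ = 1 ∧
      Tendsto (fun j => fseq R A v (φ (ψ j) + 1) - fseq R A v (φ (ψ j))) atTop
        (𝓝 (Real.log ‖exp R.ΛV w‖)) ∧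
      Tendsto (fun j => fseq R A v (φ (ψ j) + 2) - fseq R A v (φ (ψ j))) atTop
        (𝓝 (Real.log ‖exp R.ΛV (exp R.ΛV w)‖)) := by
  obtain ⟨ψ₀, hψ₀, g, hg, hB₁, hB₂⟩ := hstar φ hφ
  set u : ℕ → V := fun n =>
    (‖(R.ρ (A n) : V →L[ℂ] V) v‖⁻¹ : ℂ) • (R.ρ (A n) : V →L[ℂ] V) v
  obtain ⟨y, hy, ψ₁, hψ₁, hu⟩ := (isCompact_sphere (0 : V) 1).tendsto_subseq
    (x := fun j => u (φ (ψ₀ j))) fun j => mem_sphere_zero_iff_norm.2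
      (norm_smul_inv_norm (unit_apply_ne_zero _ hv))
  set U := R.ρ g
  have hU : (U : V →L[ℂ] V) ∈ unitary (V →L[ℂ] V) := R.unitary_ρ g hg
  set w := (↑U⁻¹ : V →L[ℂ] V) y
  have hρM : (R.ρ (g * expUnit Λ * g⁻¹) : V →L[ℂ] V) = U * exp R.ΛV * ↑U⁻¹ := by
    simp [U, R.ρ_expUnit]
  have hMy : ‖(R.ρ (g * expUnit Λ * g⁻¹) : V →L[ℂ] V) y‖ = ‖exp R.ΛV w‖ := by
    rw [hρM, norm_conj_apply_of_mem_unitary hU]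
  have hMMy : ‖(R.ρ (g * expUnit Λ * g⁻¹) : V →L[ℂ] V)
      ((R.ρ (g * expUnit Λ * g⁻¹) : V →L[ℂ] V) y)‖ = ‖exp R.ΛV (exp R.ΛV w)‖ := by
    rw [hρM, norm_conj_apply_of_mem_unitary hU, mul_apply_eq_comp, mul_apply_eq_comp,
      ← mul_apply_eq_comp (↑U⁻¹ : V →L[ℂ] V), Units.inv_mul, one_apply_eq_self]
  have hw : ‖w‖ = 1 := by
    rw [norm_inv_apply_of_mem_unitary hU, mem_sphere_zero_iff_norm.1 hy]
  have hw₀ : w ≠ 0 := norm_ne_zero_iff.1 (hw ▸ one_ne_zero)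
  have h₁ := ((R.tendsto_ρ hB₁).comp hψ₁.tendsto_atTop).clm_apply hu
  have h₂ := ((R.tendsto_ρ hB₂).comp hψ₁.tendsto_atTop).clm_apply h₁
  refine ⟨ψ₀ ∘ ψ₁, hψ₀.comp hψ₁, w, hw, ?_, ?_⟩
  · have := h₁.norm.log (hMy ▸ (norm_exp_apply_pos _ hw₀).ne')
    rw [hMy] at this
    exact this.congr fun j => (fseq_succ_sub_fseq R A hv _).symm
  · have := h₂.norm.log (hMMy ▸ (norm_exp_apply_pos _ (unit_apply_ne_zero (expUnit _) hw₀)).ne')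
    rw [hMMy] at this
    exact this.congr fun j => (fseq_add_two_sub_fseq R A hv _).symm

theorem CondStar.stepClusterCondition (hstar : CondStar A Λ) (R : Rep Λ V) (hv : v ≠ 0) :
    StepClusterCondition (spectrum ℝ R.ΛV) fun i => fseq R A v (i + 1) - fseq R A v i := by
  intro φ hφ
  obtain ⟨ψ, hψ, w, hw, h₁, h₂⟩ := hstar.exists_subseq_tendsto R hv hφ
  have hT := R.selfAdjoint_ΛV
  refine ⟨ψ, hψ, _, _, ?_, fun hle => hT.log_norm_exp_mem_spectrum hw (by linarith), h₁,
    (h₂.sub h₁).congr fun j => ?_⟩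
  · linarith [hT.two_mul_log_norm_exp_le hw]
  · ring

end Extraction

theorem dweight_exists_general (Λ : E →L[ℂ] E)
    (A : ℕ → (E →L[ℂ] E)ˣ) (hstar : CondStar A Λ)
    (R : Rep Λ V) (v : V) (hv : v ≠ 0) :
    ∃ d : ℝ, (d : ℂ) ∈ spectrum ℂ R.ΛV ∧
      Tendsto (fun i : ℕ => fseq R A v (i + 1) - fseq R A v i) atTop (𝓝 d) ∧
      Tendsto (fun i : ℕ => fseq R A v i / i) atTop (𝓝 d) := by
  obtain ⟨d, hd, htend⟩ :=
    (hstar.stepClusterCondition R hv).exists_tendsto (finite_real_spectrum R.ΛV)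
  exact ⟨d, spectrum.algebraMap_mem ℂ hd, htend, tendsto_div_of_tendsto_sub htend⟩

/-- Lemma 2.2. Assume condition (*). For every `v ≠ 0` the limits
`lim_i (f_{i+1}(v) - f_i(v))` and `lim_i i⁻¹ f_i(v)` both exist, they are equal, and their
common value `d(v)` lies in the spectrum `S(V)` of `Λ_V`. -/
theorem dweight_exists (Λ : E →L[ℂ] E) (hΛ : IsSelfAdjoint Λ)
    (A : ℕ → (E →L[ℂ] E)ˣ) (hA0 : A 0 = 1) (hstar : CondStar A Λ)
    (R : Rep Λ V) (v : V) (hv : v ≠ 0) :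
    ∃ d : ℝ, (d : ℂ) ∈ spectrum ℂ R.ΛV ∧
      Tendsto (fun i : ℕ => fseq R A v (i + 1) - fseq R A v i) atTop (𝓝 d) ∧
      Tendsto (fun i : ℕ => fseq R A v i / i) atTop (𝓝 d) :=
  dweight_exists_general Λ A hstar R v hv

end CSW
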